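/- arXiv:2309.05379 — 8 statements merged into one kernel-verified Lean document; each statement's English description precedes it below -/
import Mathlib

section
/- The Conditional-Median mechanism is strategyproof: for every facility-location instance, every agent i ∈ N, and every misreported position x'ᵢ ∈ ℝ, if (w₁,w₂) is the output of the mechanism on the true instance and (w₁',w₂') is its output on the instance obtained by replacing agent i's position by x'ᵢ (keeping all approval sets and all other positions the same), then cost_i(w₁,w₂) ≤ cost_i(w₁',w₂'), where cost_i is measured with respect to agent i's true position xᵢ. -/
open Finset

/-- The smallest element of `C` minimizing the distance to `p`. -/
noncomputable def tloc (C : Finset ℝ) (p : ℝ) : ℝ :=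
  ((C.filter fun c => ∀ c' ∈ C, |p - c| ≤ |p - c'|).min).untopD 0

/-- The smallest element of `C \ {tloc C p}` minimizing the distance to `p`. -/
noncomputable def sloc (C : Finset ℝ) (p : ℝ) : ℝ :=
  tloc (C.erase (tloc C p)) p

/-- The `⌈n/2⌉`-th smallest element of a multiset of reals (0 if empty). -/
noncomputable def medOf (l : Multiset ℝ) : ℝ :=
  (l.sort (· ≤ ·)).getD ((Multiset.card l + 1) / 2 - 1) 0

/-- The median position of the agents in `S` with positions `x`. -/
noncomputable def medianPos (S : Finset ℕ) (x : ℕ → ℝ) : ℝ :=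
  medOf (S.val.map x)

/-- The Conditional-Median mechanism, assuming facility 1 is (weakly) more popular. -/
noncomputable def condMedian (x : ℕ → ℝ) (N1 N2 : Finset ℕ) (C : Finset ℝ) : ℝ × ℝ :=
  if (N1 ∩ N2).card ≤ (N1 \ N2).card then
    let m1 := medianPos (N1 \ N2) x
    let m2 := medianPos N2 x
    let w1 := tloc C m1
    (w1, if tloc C m2 ≠ w1 then tloc C m2 else sloc C m2)
  else
    let m12 := medianPos (N1 ∩ N2) x
    (tloc C m12, sloc C m12)

/-- The output of the Conditional-Median mechanism (roles swapped if `|N₂| > |N₁|`). -/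
noncomputable def mechOutput (x : ℕ → ℝ) (N1 N2 : Finset ℕ) (C : Finset ℝ) : ℝ × ℝ :=
  if N2.card ≤ N1.card then condMedian x N1 N2 C
  else (condMedian x N2 N1 C).swap

/-- The cost of agent `i` at solution `y`: the distance to the farthest approved facility. -/
noncomputable def cost (x : ℕ → ℝ) (N1 N2 : Finset ℕ) (i : ℕ) (y : ℝ × ℝ) : ℝ :=
  if i ∈ N1 then
    if i ∈ N2 then max |x i - y.1| |x i - y.2| else |x i - y.1|
  else |x i - y.2|

/-- The social cost. -/
noncomputable def SC (x : ℕ → ℝ) (N1 N2 N : Finset ℕ) (y : ℝ × ℝ) : ℝ :=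
  ∑ i ∈ N, cost x N1 N2 i y

/-- The max cost. -/
noncomputable def MC (x : ℕ → ℝ) (N1 N2 N : Finset ℕ) (hN : N.Nonempty) (y : ℝ × ℝ) : ℝ :=
  N.sup' hN fun i => cost x N1 N2 i y

/-!
A misreport by agent `i` changes only the medians of the groups containing `i`, and it can only
push such a median away from `x i`. Moving the reference point away from `x i` never brings the
nearest candidate, nor the farther of the two nearest candidates, closer to `x i`: the reference
points at which a candidate `c` is ranked before `f` form a half-line, so a candidate ranked
before `f` at the new point and nearer to `x i` than `f` was already ranked before `f` at the old
point.
-/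

theorem List.Pairwise.countP_le_iff {α : Type*} {R : α → α → Prop} {p : α → Bool} {l : List α}
    (hl : l.Pairwise R) (hp : ∀ a b, R a b → p b → p a) {k : ℕ} (hk : k < l.length) :
    l.countP p ≤ k ↔ ¬ p l[k] := by
  induction l generalizing k with
  | nil => simp at hk
  | cons a l ih =>
    rw [List.pairwise_cons] at hl
    cases k with
    | zero =>
      rw [Nat.le_zero, List.countP_eq_zero]
      exact ⟨fun h => h a List.mem_cons_self, fun ha b hb =>
        (List.mem_cons.1 hb).elim (· ▸ ha) fun hb hpb => ha (hp a b (hl.1 b hb) hpb)⟩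
    | succ k =>
      rw [List.countP_cons, List.getElem_cons_succ, ← ih hl.2]
      by_cases ha : p a
      · simp [ha]
      · have hl0 : l.countP p = 0 :=
          List.countP_eq_zero.2 fun b hb hpb => ha (hp a b (hl.1 b hb) hpb)
        simp [ha, hl0]

lemma countP_le_iff_not_medOf {t : Multiset ℝ} (ht : t ≠ 0) (p : ℝ → Prop) [DecidablePred p]
    (hp : ∀ a b, a ≤ b → p b → p a) :
    t.countP p ≤ (Multiset.card t + 1) / 2 - 1 ↔ ¬ p (medOf t) := by
  have hk : (Multiset.card t + 1) / 2 - 1 < (t.sort (· ≤ ·)).length := by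
    rw [Multiset.length_sort]; have := Multiset.card_pos.2 ht; omega
  have hcount : t.countP p = (t.sort (· ≤ ·)).countP (fun a => decide (p a)) := by
    rw [← Multiset.coe_countP, Multiset.sort_eq]
  rw [hcount, medOf, List.getD_eq_getElem _ _ hk,
    (Multiset.pairwise_sort t _).countP_le_iff (by simpa using hp) hk, decide_eq_true_iff]

lemma le_medOf_iff {t : Multiset ℝ} (ht : t ≠ 0) (μ : ℝ) :
    μ ≤ medOf t ↔ t.countP (· < μ) ≤ (Multiset.card t + 1) / 2 - 1 := by
  rw [countP_le_iff_not_medOf ht _ fun a b hab hb => hab.trans_lt hb, not_lt]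

lemma medOf_le_iff {t : Multiset ℝ} (ht : t ≠ 0) (μ : ℝ) :
    medOf t ≤ μ ↔ (Multiset.card t + 1) / 2 - 1 < t.countP (· ≤ μ) := by
  rw [← not_le, countP_le_iff_not_medOf ht _ fun a b hab hb => hab.trans hb, not_not]

lemma medOf_cons_mem_uIcc (a b : ℝ) (s : Multiset ℝ) :
    medOf (a ::ₘ s) ∈ Set.uIcc a (medOf (b ::ₘ s)) := by
  set m := medOf (a ::ₘ s)
  have hcard : Multiset.card (b ::ₘ s) = Multiset.card (a ::ₘ s) := by simp
  rcases lt_trichotomy a m with ham | ham | ham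
  · refine Set.mem_uIcc_of_le ham.le ?_
    rw [le_medOf_iff Multiset.cons_ne_zero, hcard]
    refine le_trans ?_ ((le_medOf_iff Multiset.cons_ne_zero m).1 le_rfl)
    simp only [Multiset.countP_cons, ham, if_true]
    split_ifs <;> omega
  · exact ham ▸ Set.left_mem_uIcc
  · refine Set.mem_uIcc_of_ge ?_ ham.le
    rw [medOf_le_iff Multiset.cons_ne_zero, hcard]
    refine lt_of_lt_of_le ((medOf_le_iff Multiset.cons_ne_zero m).1 le_rfl) ?_
    simp only [Multiset.countP_cons, not_le.2 ham, if_false]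
    split_ifs <;> omega

lemma medianPos_update_of_notMem {S : Finset ℕ} {i : ℕ} (hi : i ∉ S) (x : ℕ → ℝ) (x' : ℝ) :
    medianPos S (Function.update x i x') = medianPos S x := by
  unfold medianPos
  congr 1
  exact Multiset.map_congr rfl fun j hj => Function.update_of_ne (ne_of_mem_of_not_mem hj hi) _ _

lemma medianPos_mem_uIcc_update {S : Finset ℕ} {i : ℕ} (hi : i ∈ S) (x : ℕ → ℝ) (x' : ℝ) :
    medianPos S x ∈ Set.uIcc (x i) (medianPos S (Function.update x i x')) := by
  have hS : S.val = i ::ₘ (S.erase i).val := by rw [Finset.erase_val, Multiset.cons_erase hi]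
  have hrest : (S.erase i).val.map (Function.update x i x') = (S.erase i).val.map x :=
    Multiset.map_congr rfl fun j hj => Function.update_of_ne (Finset.ne_of_mem_erase hj) _ _
  rw [medianPos, medianPos, hS, Multiset.map_cons, Multiset.map_cons, Function.update_self, hrest]
  exact medOf_cons_mem_uIcc _ _ _

/-- The ranking of candidates in which `tloc C m` is the first element of `C`. -/
def NearerTo (m c f : ℝ) : Prop :=
  |m - c| < |m - f| ∨ (|m - c| = |m - f| ∧ c < f)

section NearerTo

variable {m p q c f : ℝ}

lemma nearerTo_iff : NearerTo m c f ↔ (c < f ∧ 2 * m ≤ c + f) ∨ (f < c ∧ c + f < 2 * m) := by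
  unfold NearerTo
  rcases abs_cases (m - c) with ⟨hc, _⟩ | ⟨hc, _⟩ <;>
  rcases abs_cases (m - f) with ⟨hf, _⟩ | ⟨hf, _⟩ <;>
  rw [hc, hf] <;> grind

lemma NearerTo.asymm (h : NearerTo m c f) : ¬ NearerTo m f c := by
  rw [nearerTo_iff] at *
  grind

lemma NearerTo.ne (h : NearerTo m c f) : c ≠ f := by
  rintro rfl
  exact h.asymm h

lemma NearerTo.of_mem_uIcc (hp : NearerTo p c f) (hq : NearerTo q c f) (hm : m ∈ Set.uIcc p q) :
    NearerTo m c f := by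
  rw [nearerTo_iff, Set.mem_uIcc] at *
  grind

end NearerTo

section Nearest

variable {C : Finset ℝ} {m c w : ℝ}

lemma tloc_mem_and_nearerTo (hC : C.Nonempty) :
    tloc C m ∈ C ∧ ∀ c ∈ C, c ≠ tloc C m → NearerTo m (tloc C m) c := by
  set F := C.filter fun c => ∀ c' ∈ C, |m - c| ≤ |m - c'|
  obtain ⟨a, ha, hamin⟩ := C.exists_min_image (fun c => |m - c|) hC
  have hF : F.Nonempty := ⟨a, Finset.mem_filter.2 ⟨ha, hamin⟩⟩
  have htloc : tloc C m = F.min' hF := by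
    rw [tloc, ← Finset.coe_min' hF]
    rfl
  obtain ⟨htC, htmin⟩ := Finset.mem_filter.1 (htloc ▸ F.min'_mem hF)
  refine ⟨htC, fun c hc hne => (htmin c hc).lt_or_eq.imp id fun heq => ⟨heq, ?_⟩⟩
  have hcF : c ∈ F := Finset.mem_filter.2 ⟨hc, fun c' hc' => heq ▸ htmin c' hc'⟩
  exact (htloc ▸ F.min'_le c hcF).lt_of_ne hne.symm

lemma tloc_mem (hC : C.Nonempty) : tloc C m ∈ C :=
  (tloc_mem_and_nearerTo hC).1

lemma nearerTo_tloc (hc : c ∈ C) (hne : c ≠ tloc C m) : NearerTo m (tloc C m) c :=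
  (tloc_mem_and_nearerTo ⟨c, hc⟩).2 c hc hne

lemma not_nearerTo_tloc (hc : c ∈ C) : ¬ NearerTo m c (tloc C m) :=
  fun h => h.asymm (nearerTo_tloc hc h.ne)

lemma tloc_erase_of_ne (h : tloc C m ≠ w) : tloc (C.erase w) m = tloc C m := by
  rcases C.eq_empty_or_nonempty with rfl | hC
  · rfl
  have htw : tloc C m ∈ C.erase w := Finset.mem_erase.2 ⟨h, tloc_mem hC⟩
  by_contra hne
  exact not_nearerTo_tloc (Finset.mem_of_mem_erase (tloc_mem ⟨_, htw⟩))
    (nearerTo_tloc htw (Ne.symm hne))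

lemma sloc_mem_erase (hC : 2 ≤ C.card) : sloc C m ∈ C.erase (tloc C m) :=
  tloc_mem (Finset.one_lt_card_iff_nontrivial.1 hC).erase_nonempty

lemma nearerTo_sloc (hc : c ∈ C) (ht : c ≠ tloc C m) (hs : c ≠ sloc C m) :
    NearerTo m (sloc C m) c :=
  nearerTo_tloc (Finset.mem_erase.2 ⟨ht, hc⟩) hs

lemma eq_tloc_of_nearerTo_sloc (hc : c ∈ C) (h : NearerTo m c (sloc C m)) : c = tloc C m := by
  by_contra hne
  exact h.asymm (nearerTo_sloc hc hne h.ne)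

end Nearest

section Monotone

variable {C : Finset ℝ} {p m m' : ℝ}

lemma abs_sub_tloc_le_of_mem_uIcc (h : m ∈ Set.uIcc p m') :
    |p - tloc C m| ≤ |p - tloc C m'| := by
  rcases C.eq_empty_or_nonempty with rfl | hC
  · rfl
  by_contra! hlt
  exact not_nearerTo_tloc (tloc_mem hC) <| NearerTo.of_mem_uIcc (Or.inl hlt)
    (nearerTo_tloc (tloc_mem hC) (ne_of_apply_ne (|p - ·|) hlt.ne')) h

lemma max_abs_sub_tloc_sloc_le_of_mem_uIcc (hC : 2 ≤ C.card) (h : m ∈ Set.uIcc p m') :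
    max |p - tloc C m| |p - sloc C m| ≤ max |p - tloc C m'| |p - sloc C m'| := by
  have hCne : C.Nonempty := Finset.card_pos.1 (by omega)
  have hs' := sloc_mem_erase (m := m') hC
  suffices ∀ f ∈ C, (f = tloc C m ∨ f = sloc C m) →
      |p - f| ≤ max |p - tloc C m'| |p - sloc C m'| from
    max_le (this _ (tloc_mem hCne) (.inl rfl))
      (this _ (Finset.mem_of_mem_erase (sloc_mem_erase hC)) (.inr rfl))
  intro f hf hsel
  by_contra! hlt
  have ht'lt := (le_max_left _ _).trans_lt hlt
  have hs'lt := (le_max_right _ _).trans_lt hlt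
  -- both candidates chosen at `m'` are ranked before `f` at `m'` and at `p`, hence at `m`;
  -- but at `m` no candidate other than `tloc C m` is ranked before `f`
  have hbt : NearerTo m (tloc C m') f := NearerTo.of_mem_uIcc (Or.inl ht'lt)
    (nearerTo_tloc hf (ne_of_apply_ne (|p - ·|) ht'lt.ne')) h
  have hbs : NearerTo m (sloc C m') f := NearerTo.of_mem_uIcc (Or.inl hs'lt)
    (nearerTo_sloc hf (ne_of_apply_ne (|p - ·|) ht'lt.ne') (ne_of_apply_ne (|p - ·|) hs'lt.ne')) h
  rcases hsel with rfl | rfl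
  · exact not_nearerTo_tloc (tloc_mem hCne) hbt
  · exact Finset.ne_of_mem_erase hs' <|
      (eq_tloc_of_nearerTo_sloc (Finset.mem_of_mem_erase hs') hbs).trans
        (eq_tloc_of_nearerTo_sloc (tloc_mem hCne) hbt).symm

end Monotone

section Mechanism

variable {x : ℕ → ℝ} {N1 N2 : Finset ℕ} {C : Finset ℝ} {i : ℕ}

lemma condMedian_of_le (h : (N1 ∩ N2).card ≤ (N1 \ N2).card) :
    condMedian x N1 N2 C =
      (tloc C (medianPos (N1 \ N2) x),
        tloc (C.erase (tloc C (medianPos (N1 \ N2) x))) (medianPos N2 x)) := by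
  rw [condMedian, if_pos h]
  dsimp only
  split_ifs with hne
  · rw [tloc_erase_of_ne hne]
  · rw [sloc, not_not.1 hne]

lemma condMedian_of_lt (h : (N1 \ N2).card < (N1 ∩ N2).card) :
    condMedian x N1 N2 C = (tloc C (medianPos (N1 ∩ N2) x), sloc C (medianPos (N1 ∩ N2) x)) :=
  if_neg h.not_ge

lemma cost_condMedian_le_update (hC : 2 ≤ C.card) (hi : i ∈ N1 ∪ N2) (x' : ℝ) :
    cost x N1 N2 i (condMedian x N1 N2 C) ≤
      cost x N1 N2 i (condMedian (Function.update x i x') N1 N2 C) := by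
  rcases le_or_gt (N1 ∩ N2).card (N1 \ N2).card with h | h
  · rw [condMedian_of_le h, condMedian_of_le h]
    by_cases hi12 : i ∈ N1 \ N2
    · obtain ⟨hi1, hi2⟩ := Finset.mem_sdiff.1 hi12
      simp only [cost, hi1, hi2, if_true, if_false]
      exact abs_sub_tloc_le_of_mem_uIcc (medianPos_mem_uIcc_update hi12 x x')
    · have hi2 : i ∈ N2 := by grind
      have hw2 := abs_sub_tloc_le_of_mem_uIcc (C := C.erase (tloc C (medianPos (N1 \ N2) x)))
        (medianPos_mem_uIcc_update hi2 x x')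
      rw [medianPos_update_of_notMem hi12]
      simp only [cost, hi2, if_true]
      split_ifs
      exacts [max_le_max le_rfl hw2, hw2]
  · rw [condMedian_of_lt h, condMedian_of_lt h]
    by_cases hi12 : i ∈ N1 ∩ N2
    · obtain ⟨hi1, hi2⟩ := Finset.mem_inter.1 hi12
      simp only [cost, hi1, hi2, if_true]
      exact max_abs_sub_tloc_sloc_le_of_mem_uIcc hC (medianPos_mem_uIcc_update hi12 x x')
    · rw [medianPos_update_of_notMem hi12]

lemma cost_swap (hi : i ∈ N1 ∪ N2) (y : ℝ × ℝ) : cost x N1 N2 i y.swap = cost x N2 N1 i y := by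
  unfold cost
  grind [max_comm]

end Mechanism

theorem conditionalMedian_strategyproof_general
    (N N1 N2 : Finset ℕ) (x : ℕ → ℝ) (C : Finset ℝ)
    (hU : N1 ∪ N2 = N) (hC : 2 ≤ C.card)
    (i : ℕ) (hi : i ∈ N) (x' : ℝ) :
    cost x N1 N2 i (mechOutput x N1 N2 C) ≤
      cost x N1 N2 i (mechOutput (Function.update x i x') N1 N2 C) := by
  subst hU
  unfold mechOutput
  split_ifs
  · exact cost_condMedian_le_update hC hi x'
  · rw [cost_swap hi, cost_swap hi]
    exact cost_condMedian_le_update hC (Finset.union_comm N1 N2 ▸ hi) x'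

/-- The Conditional-Median mechanism is strategyproof: misreporting a position cannot
decrease an agent's cost, measured with respect to the true position. -/
theorem conditionalMedian_strategyproof
    (N N1 N2 : Finset ℕ) (x : ℕ → ℝ) (C : Finset ℝ)
    (hN : N.Nonempty) (h1 : N1.Nonempty) (h2 : N2.Nonempty)
    (hU : N1 ∪ N2 = N) (hC : 2 ≤ C.card)
    (i : ℕ) (hi : i ∈ N) (x' : ℝ) :
    cost x N1 N2 i (mechOutput x N1 N2 C) ≤
      cost x N1 N2 i (mechOutput (Function.update x i x') N1 N2 C) :=
  conditionalMedian_strategyproof_general N N1 N2 x C hU hC i hi x'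
end

section
/- The Conditional-Median mechanism is 5-approximate for the max cost: for every facility-location instance, if (w₁,w₂) is the output of the Conditional-Median mechanism, then for every feasible solution (y₁,y₂) one has MC(w₁,w₂) ≤ 5 · MC(y₁,y₂). -/
open Finset

/-!
Let `B` be the max cost of `(y₁, y₂)`, so every agent of `Nⱼ` lies within `B` of `yⱼ`. A median
of a group of agents is an agent position, hence also within `B` of the group's `yⱼ`; if a
facility is within `D` of that median, every agent of the group is within `2B + D` of it.

When the shared agents form the majority of `N₁`, both facilities are placed around the median
`m` of `N₁ ∩ N₂`, which is within `B` of both `y₁` and `y₂`; since `y₁ ≠ y₂`, one of them also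
bounds the distance from `m` to the second-nearest candidate, so `D = B`. Otherwise `w₁` is the
candidate nearest to a median of `N₁ \ N₂`, so `|w₁ - y₁| ≤ 2B`. If the candidate nearest to the
median `m₂` of `N₂` is taken by `w₁`, the second-nearest one is no farther from `m₂` than `y₁`
or `y₂`, and `|m₂ - y₁| ≤ |m₂ - w₁| + |w₁ - y₁| ≤ 3B`; so `D = 3B`, which gives the factor 5.
-/

section NearestCandidate

variable {C : Finset ℝ} {p c y1 y2 : ℝ}

lemma abs_sub_tloc_le (hc : c ∈ C) : |p - tloc C p| ≤ |p - c| := by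
  obtain ⟨c₀, hc₀, hmin⟩ := C.exists_min_image (fun c => |p - c|) ⟨c, hc⟩
  have hne : (C.filter fun c => ∀ c' ∈ C, |p - c| ≤ |p - c'|).Nonempty :=
    ⟨c₀, mem_filter.2 ⟨hc₀, hmin⟩⟩
  rw [tloc, ← coe_min' hne]
  exact (mem_filter.1 (min'_mem _ hne)).2 c hc

lemma abs_sub_sloc_le (hc : c ∈ C) (hct : c ≠ tloc C p) : |p - sloc C p| ≤ |p - c| :=
  abs_sub_tloc_le (mem_erase.2 ⟨hct, hc⟩)

lemma abs_sub_sloc_le_max (hy1 : y1 ∈ C) (hy2 : y2 ∈ C) (hy : y1 ≠ y2) :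
    |p - sloc C p| ≤ max |p - y1| |p - y2| := by
  by_cases h : y1 = tloc C p
  · exact (abs_sub_sloc_le hy2 (h ▸ hy.symm)).trans (le_max_right _ _)
  · exact (abs_sub_sloc_le hy1 h).trans (le_max_left _ _)

end NearestCandidate

lemma medOf_mem {l : Multiset ℝ} (hl : l ≠ 0) : medOf l ∈ l := by
  have hidx : (Multiset.card l + 1) / 2 - 1 < (l.sort (· ≤ ·)).length := by
    have := Multiset.card_pos.2 hl
    rw [Multiset.length_sort]
    omega
  rw [← Multiset.mem_sort (· ≤ ·), medOf, List.getD_eq_getElem _ _ hidx]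
  exact List.getElem_mem _

lemma abs_medianPos_sub_le {S : Finset ℕ} {x : ℕ → ℝ} {y B : ℝ} (hS : S.Nonempty)
    (h : ∀ i ∈ S, |x i - y| ≤ B) : |medianPos S x - y| ≤ B := by
  obtain ⟨j, hj, hxj⟩ :=
    Multiset.mem_map.1 (medOf_mem (by simpa using hS.ne_empty) : medianPos S x ∈ S.val.map x)
  rw [medianPos, ← hxj]
  exact h j hj

lemma abs_sub_le_two_mul_add {a m y w B D : ℝ} (ha : |a - y| ≤ B) (hm : |m - y| ≤ B)
    (hw : |m - w| ≤ D) : |a - w| ≤ 2 * B + D := by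
  have h₁ := abs_sub_le a y w
  have h₂ := abs_sub_le y m w
  rw [abs_sub_comm y m] at h₂
  linarith

lemma Finset.Nonempty.of_union_of_card_le {α : Type*} [DecidableEq α] {s t : Finset α}
    (hst : (s ∪ t).Nonempty) (h : t.card ≤ s.card) : s.Nonempty := by
  have := card_union_le s t
  have := hst.card_pos
  rw [← Finset.card_pos]
  omega

def ApprovedWithin (x : ℕ → ℝ) (N1 N2 : Finset ℕ) (B : ℝ) (w : ℝ × ℝ) : Prop :=
  (∀ i ∈ N1, |x i - w.1| ≤ B) ∧ ∀ i ∈ N2, |x i - w.2| ≤ B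

section ApprovedWithin

variable {x : ℕ → ℝ} {N N1 N2 : Finset ℕ} {B : ℝ} {w : ℝ × ℝ}

lemma ApprovedWithin.mono {D : ℝ} (h : ApprovedWithin x N1 N2 B w) (hBD : B ≤ D) :
    ApprovedWithin x N1 N2 D w :=
  ⟨fun i hi => (h.1 i hi).trans hBD, fun i hi => (h.2 i hi).trans hBD⟩

lemma approvedWithin_swap : ApprovedWithin x N2 N1 B w.swap ↔ ApprovedWithin x N1 N2 B w :=
  and_comm

lemma cost_le_iff {i : ℕ} (hi : i ∈ N1 ∪ N2) :
    cost x N1 N2 i w ≤ B ↔ (i ∈ N1 → |x i - w.1| ≤ B) ∧ (i ∈ N2 → |x i - w.2| ≤ B) := by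
  rw [mem_union] at hi
  unfold cost
  split_ifs with h1 h2
  · simp [h1, h2]
  · simp [h1, h2]
  · simp [h1, hi.resolve_left h1]

lemma MC_le_iff (hN : N.Nonempty) (hU : N1 ∪ N2 = N) :
    MC x N1 N2 N hN w ≤ B ↔ ApprovedWithin x N1 N2 B w := by
  subst hU
  rw [MC, sup'_le_iff]
  constructor
  · intro h
    exact ⟨fun i hi => ((cost_le_iff (mem_union_left _ hi)).1 (h i (mem_union_left _ hi))).1 hi,
      fun i hi => ((cost_le_iff (mem_union_right _ hi)).1 (h i (mem_union_right _ hi))).2 hi⟩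
  · exact fun h i hi => (cost_le_iff hi).2 ⟨h.1 i, h.2 i⟩

end ApprovedWithin

section ConditionalMedian

variable {x : ℕ → ℝ} {N1 N2 : Finset ℕ} {C : Finset ℝ} {y1 y2 m B : ℝ}

lemma abs_sub_ite_tloc_sloc_le {w1 : ℝ} (hy1 : y1 ∈ C) (hy2 : y2 ∈ C) (hy : y1 ≠ y2)
    (hm : |m - y2| ≤ B) (hw1 : |w1 - y1| ≤ 2 * B) :
    |m - if tloc C m ≠ w1 then tloc C m else sloc C m| ≤ 3 * B := by
  have hB : 0 ≤ B := by linarith [abs_nonneg (w1 - y1)]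
  split_ifs with hfree
  · linarith [(abs_sub_tloc_le (p := m) hy2).trans hm]
  · have hmw1 : |m - w1| ≤ B := not_ne_iff.1 hfree ▸ (abs_sub_tloc_le hy2).trans hm
    have hmy1 : |m - y1| ≤ 3 * B := by linarith [abs_sub_le m w1 y1]
    exact (abs_sub_sloc_le_max hy1 hy2 hy).trans (max_le hmy1 (by linarith))

lemma approvedWithin_tloc_sloc (hy1 : y1 ∈ C) (hy2 : y2 ∈ C) (hy : y1 ≠ y2)
    (hB : ApprovedWithin x N1 N2 B (y1, y2)) (hm1 : |m - y1| ≤ B) (hm2 : |m - y2| ≤ B) :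
    ApprovedWithin x N1 N2 (3 * B) (tloc C m, sloc C m) := by
  have hw1 : |m - tloc C m| ≤ B := (abs_sub_tloc_le hy1).trans hm1
  have hw2 : |m - sloc C m| ≤ B := (abs_sub_sloc_le_max hy1 hy2 hy).trans (max_le hm1 hm2)
  exact ⟨fun i hi => by linarith [abs_sub_le_two_mul_add (hB.1 i hi) hm1 hw1],
    fun i hi => by linarith [abs_sub_le_two_mul_add (hB.2 i hi) hm2 hw2]⟩

lemma condMedian_approvedWithin (h1 : N1.Nonempty) (hy1 : y1 ∈ C) (hy2 : y2 ∈ C)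
    (hy : y1 ≠ y2) (hB : ApprovedWithin x N1 N2 B (y1, y2)) :
    ApprovedWithin x N1 N2 (5 * B) (condMedian x N1 N2 C) := by
  obtain ⟨i₀, hi₀⟩ := h1
  have hB0 : 0 ≤ B := (abs_nonneg _).trans (hB.1 i₀ hi₀)
  unfold condMedian
  split_ifs with hcard
  · have hP : (N1 \ N2).Nonempty := by
      rw [← card_pos]
      have := card_sdiff_add_card_inter N1 N2
      have := card_pos.2 ⟨i₀, hi₀⟩
      omega
    set m1 := medianPos (N1 \ N2) x
    set w1 := tloc C m1
    have hm1 : |m1 - y1| ≤ B := abs_medianPos_sub_le hP fun i hi => hB.1 i (mem_sdiff.1 hi).1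
    have hw1 : |m1 - w1| ≤ B := (abs_sub_tloc_le hy1).trans hm1
    have hw1y1 : |w1 - y1| ≤ 2 * B := by
      rw [abs_sub_comm] at hw1
      linarith [abs_sub_le w1 m1 y1]
    refine ⟨fun i hi => by linarith [abs_sub_le_two_mul_add (hB.1 i hi) hm1 hw1], fun i hi => ?_⟩
    have hm2 := abs_medianPos_sub_le ⟨i, hi⟩ hB.2
    linarith [abs_sub_le_two_mul_add (hB.2 i hi) hm2
      (abs_sub_ite_tloc_sloc_le hy1 hy2 hy hm2 hw1y1)]
  · have hS : (N1 ∩ N2).Nonempty := by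
      rw [← card_pos]
      omega
    have := approvedWithin_tloc_sloc hy1 hy2 hy hB
      (abs_medianPos_sub_le hS fun i hi => hB.1 i (mem_inter.1 hi).1)
      (abs_medianPos_sub_le hS fun i hi => hB.2 i (mem_inter.1 hi).2)
    exact this.mono (by linarith)

end ConditionalMedian

theorem conditionalMedian_maxCost_five_approx_general
    (N N1 N2 : Finset ℕ) (x : ℕ → ℝ) (C : Finset ℝ)
    (hN : N.Nonempty)
    (hU : N1 ∪ N2 = N)
    (y1 y2 : ℝ) (hy1 : y1 ∈ C) (hy2 : y2 ∈ C) (hy : y1 ≠ y2) :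
    MC x N1 N2 N hN (mechOutput x N1 N2 C) ≤ 5 * MC x N1 N2 N hN (y1, y2) := by
  have hopt : ApprovedWithin x N1 N2 (MC x N1 N2 N hN (y1, y2)) (y1, y2) :=
    (MC_le_iff hN hU).1 le_rfl
  rw [MC_le_iff hN hU, mechOutput]
  subst hU
  split_ifs with hcard
  · exact condMedian_approvedWithin (hN.of_union_of_card_le hcard) hy1 hy2 hy hopt
  · rw [← union_comm] at hN
    exact approvedWithin_swap.1 <| condMedian_approvedWithin
      (hN.of_union_of_card_le (by omega)) hy2 hy1 hy.symm (approvedWithin_swap.2 hopt)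

/-- The Conditional-Median mechanism is 5-approximate for the max cost. -/
theorem conditionalMedian_maxCost_five_approx
    (N N1 N2 : Finset ℕ) (x : ℕ → ℝ) (C : Finset ℝ)
    (hN : N.Nonempty) (h1 : N1.Nonempty) (h2 : N2.Nonempty)
    (hU : N1 ∪ N2 = N) (hC : 2 ≤ C.card)
    (y1 y2 : ℝ) (hy1 : y1 ∈ C) (hy2 : y2 ∈ C) (hy : y1 ≠ y2) :
    MC x N1 N2 N hN (mechOutput x N1 N2 C) ≤ 5 * MC x N1 N2 N hN (y1, y2) :=
  conditionalMedian_maxCost_five_approx_general N N1 N2 x C hN hU y1 y2 hy1 hy2 hy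
end

section
/- The max-cost approximation ratio 5 of the Conditional-Median mechanism is tight: for every δ ∈ (0,1) there exists a facility-location instance and a feasible solution (y₁,y₂) with MC(y₁,y₂) > 0 such that the output (w₁,w₂) of the Conditional-Median mechanism on this instance satisfies MC(w₁,w₂) ≥ (5 − δ) · MC(y₁,y₂). -/
open Finset

/-!
Four agents at positions `2, 3, 2, 0`; agents `0, 1` approve only facility 1, agent `2` approves
both, agent `3` approves only facility 2; the candidates are `-3, 1, 3`. Placing the facilities at
`(3, 1)` costs every agent at most `1`. The mechanism takes the median `2` of `N₁ \ N₂`, which is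
equidistant from `1` and `3`, so tie-breaking puts facility 1 at `1`. The median `0` of `N₂` is
also nearest to `1`, so facility 2 goes to the next nearest candidate, where `-3` and `3` tie
and `-3` wins. The shared agent at `2` then pays `5`, so the ratio is exactly `5`.
-/

theorem tloc_eq_of_forall {C : Finset ℝ} {p c : ℝ} (hc : c ∈ C)
    (hnearest : ∀ c' ∈ C, |p - c| ≤ |p - c'|)
    (hleast : ∀ c' ∈ C, |p - c'| ≤ |p - c| → c ≤ c') : tloc C p = c := by
  have hmin : (C.filter fun c => ∀ c' ∈ C, |p - c| ≤ |p - c'|).min = c :=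
    le_antisymm (Finset.min_le (mem_filter.2 ⟨hc, hnearest⟩))
      (Finset.le_min fun c' hc' => by
        obtain ⟨hc'C, hc'nearest⟩ := mem_filter.1 hc'
        exact WithTop.coe_le_coe.2 (hleast c' hc'C (hc'nearest c hc)))
  simp [tloc, hmin]

theorem medOf_pair (a b : ℝ) : medOf {a, b} = min a b := by
  wlog hab : a ≤ b generalizing a b
  · rw [Multiset.pair_comm, this b a (le_of_not_ge hab), min_comm]
  have hsort : ({a, b} : Multiset ℝ).sort (· ≤ ·) = [a, b] :=
    List.Perm.eq_of_pairwise' (Multiset.pairwise_sort _ _) (by simp [hab])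
      (Multiset.coe_eq_coe.mp (by rw [Multiset.sort_eq]; rfl))
  rw [medOf, hsort]
  simp [hab]

theorem medianPos_pair {i j : ℕ} (hij : i ≠ j) (x : ℕ → ℝ) :
    medianPos {i, j} x = min (x i) (x j) := by
  rw [medianPos, Finset.insert_val_of_notMem (by simpa using hij)]
  exact medOf_pair (x i) (x j)

theorem MC_eq_of_forall_le {x : ℕ → ℝ} {N1 N2 N : Finset ℕ} (hN : N.Nonempty) {y : ℝ × ℝ}
    {m : ℝ} (hle : ∀ i ∈ N, cost x N1 N2 i y ≤ m) {i : ℕ} (hi : i ∈ N)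
    (heq : cost x N1 N2 i y = m) : MC x N1 N2 N hN y = m :=
  le_antisymm (Finset.sup'_le _ _ hle) (heq ▸ Finset.le_sup' (fun i => cost x N1 N2 i y) hi)

namespace TightInstance

noncomputable def pos : ℕ → ℝ
  | 0 => 2
  | 1 => 3
  | 2 => 2
  | _ => 0

theorem tloc_two : tloc {-3, 1, 3} 2 = 1 :=
  tloc_eq_of_forall (by simp) (by norm_num) (by norm_num)

theorem tloc_zero : tloc {-3, 1, 3} 0 = 1 :=
  tloc_eq_of_forall (by simp) (by norm_num) (by norm_num)

theorem sloc_zero : sloc {-3, 1, 3} 0 = -3 := by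
  rw [sloc, tloc_zero, erase_insert_of_ne (by norm_num), erase_insert (by norm_num)]
  exact tloc_eq_of_forall (by simp) (by norm_num) (by norm_num)

theorem mechOutput_eq : mechOutput pos {0, 1, 2} {2, 3} {-3, 1, 3} = (1, -3) := by
  have hmed₁ : medianPos ({0, 1, 2} \ {2, 3}) pos = 2 := by
    rw [show ({0, 1, 2} \ {2, 3} : Finset ℕ) = {0, 1} by decide, medianPos_pair (by decide)]
    norm_num [pos]
  have hmed₂ : medianPos {2, 3} pos = 0 := by
    rw [medianPos_pair (by decide)]
    norm_num [pos]
  rw [mechOutput, if_pos (by decide), condMedian, if_pos (by decide)]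
  simp [hmed₁, hmed₂, tloc_two, tloc_zero, sloc_zero]

theorem agents_nonempty : ({0, 1, 2, 3} : Finset ℕ).Nonempty := ⟨0, by simp⟩

theorem MC_opt : MC pos {0, 1, 2} {2, 3} {0, 1, 2, 3} agents_nonempty (3, 1) = 1 :=
  MC_eq_of_forall_le _ (i := 0) (by norm_num [cost, pos]) (by simp)
    (by norm_num [cost, pos])

theorem MC_mechOutput : MC pos {0, 1, 2} {2, 3} {0, 1, 2, 3} agents_nonempty (1, -3) = 5 :=
  MC_eq_of_forall_le _ (i := 2) (by norm_num [cost, pos]) (by simp)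
    (by norm_num [cost, pos])

end TightInstance

theorem conditionalMedian_maxCost_tight_general (δ : ℝ) (hδ0 : 0 < δ) :
    ∃ (N N1 N2 : Finset ℕ) (x : ℕ → ℝ) (C : Finset ℝ) (y1 y2 : ℝ)
      (hN : N.Nonempty),
      N1.Nonempty ∧ N2.Nonempty ∧ N1 ∪ N2 = N ∧ 2 ≤ C.card ∧
      y1 ∈ C ∧ y2 ∈ C ∧ y1 ≠ y2 ∧ 0 < MC x N1 N2 N hN (y1, y2) ∧
      (5 - δ) * MC x N1 N2 N hN (y1, y2) ≤ MC x N1 N2 N hN (mechOutput x N1 N2 C) := by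
  refine ⟨{0, 1, 2, 3}, {0, 1, 2}, {2, 3}, TightInstance.pos, {-3, 1, 3}, 3, 1,
    TightInstance.agents_nonempty,
    by simp, by simp, by decide, ?_, by simp, by simp, by norm_num, ?_, ?_⟩
  · rw [card_insert_of_notMem (by norm_num), card_pair (by norm_num)]
    norm_num
  · rw [TightInstance.MC_opt]; norm_num
  · rw [TightInstance.mechOutput_eq, TightInstance.MC_opt, TightInstance.MC_mechOutput]
    linarith

/-- The approximation ratio 5 for the max cost is tight. -/
theorem conditionalMedian_maxCost_tight (δ : ℝ) (hδ0 : 0 < δ) (hδ1 : δ < 1) :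
    ∃ (N N1 N2 : Finset ℕ) (x : ℕ → ℝ) (C : Finset ℝ) (y1 y2 : ℝ)
      (hN : N.Nonempty),
      N1.Nonempty ∧ N2.Nonempty ∧ N1 ∪ N2 = N ∧ 2 ≤ C.card ∧
      y1 ∈ C ∧ y2 ∈ C ∧ y1 ≠ y2 ∧ 0 < MC x N1 N2 N hN (y1, y2) ∧
      (5 - δ) * MC x N1 N2 N hN (y1, y2) ≤ MC x N1 N2 N hN (mechOutput x N1 N2 C) :=
  conditionalMedian_maxCost_tight_general δ hδ0
end

section
/- Let S be a finite set, x : S → ℝ, m, o, w ∈ ℝ, and c : S → ℝ. Suppose (i) Σ_{i∈S} |x_i − m| ≤ Σ_{i∈S} |x_i − o|, (ii) |x_i − o| ≤ |x_i − c_i| for every i ∈ S, and (iii) |m − w| ≤ |m − c_i| for every i ∈ S. Then Σ_{i∈S} |x_i − w| ≤ 3 · Σ_{i∈S} |x_i − c_i|. -/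
/-- Core median-routing inequality (equations (1) and (3) of the social-cost analysis). -/
theorem median_routing_three
    {α : Type*} (S : Finset α) (x c : α → ℝ) (m o w : ℝ)
    (h1 : ∑ i ∈ S, |x i - m| ≤ ∑ i ∈ S, |x i - o|)
    (h2 : ∀ i ∈ S, |x i - o| ≤ |x i - c i|)
    (h3 : ∀ i ∈ S, |m - w| ≤ |m - c i|) :
    ∑ i ∈ S, |x i - w| ≤ 3 * ∑ i ∈ S, |x i - c i| := by
  have key : ∑ i ∈ S, |x i - w| ≤ ∑ i ∈ S, (2 * |x i - m| + |x i - c i|) := by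
    apply Finset.sum_le_sum
    intro i hi
    have t1 : |x i - w| ≤ |x i - m| + |m - w| := abs_sub_le _ _ _
    have t2 : |m - c i| ≤ |m - x i| + |x i - c i| := abs_sub_le _ _ _
    have := h3 i hi
    rw [abs_sub_comm m (x i)] at t2
    linarith
  have s2 : ∑ i ∈ S, (2 * |x i - m| + |x i - c i|)
      = 2 * ∑ i ∈ S, |x i - m| + ∑ i ∈ S, |x i - c i| := by
    rw [Finset.sum_add_distrib, Finset.mul_sum]
  have s3 : ∑ i ∈ S, |x i - o| ≤ ∑ i ∈ S, |x i - c i| :=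
    Finset.sum_le_sum h2
  linarith
end

section
/- Let T and S be finite sets with |T| ≤ |S|, a : T → ℝ, x : S → ℝ, m, o, w ∈ ℝ, and c : T → ℝ. Suppose (i) |a_i − o| ≤ |a_i − c_i| for every i ∈ T, (ii) |m − w| ≤ |m − o|, and (iii) Σ_{j∈S} |x_j − m| ≤ Σ_{j∈S} |x_j − o|. Then Σ_{i∈T} |a_i − w| ≤ Σ_{i∈T} |a_i − c_i| + 4 · Σ_{j∈S} |x_j − o|. -/
/-- Equation (2) of the social-cost analysis. -/
theorem routing_via_other_group
    {α β : Type*} (T : Finset α) (S : Finset β) (hcard : T.card ≤ S.card)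
    (a : α → ℝ) (x : β → ℝ) (m o w : ℝ) (c : α → ℝ)
    (h1 : ∀ i ∈ T, |a i - o| ≤ |a i - c i|)
    (h2 : |m - w| ≤ |m - o|)
    (h3 : ∑ j ∈ S, |x j - m| ≤ ∑ j ∈ S, |x j - o|) :
    ∑ i ∈ T, |a i - w| ≤ ∑ i ∈ T, |a i - c i| + 4 * ∑ j ∈ S, |x j - o| := by
  have hSsum : (0:ℝ) ≤ ∑ j ∈ S, |x j - o| :=
    Finset.sum_nonneg fun j _ => abs_nonneg _
  -- bound S.card * |m - o|
  have hmo : (S.card : ℝ) * |m - o| ≤ 2 * ∑ j ∈ S, |x j - o| := by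
    have : (S.card : ℝ) * |m - o| = ∑ _j ∈ S, |m - o| := by
      rw [Finset.sum_const, nsmul_eq_mul]
    rw [this]
    have h4 : ∑ j ∈ S, |m - o| ≤ ∑ j ∈ S, (|x j - m| + |x j - o|) := by
      refine Finset.sum_le_sum fun j _ => ?_
      have := abs_sub (x j - m) (x j - o)
      calc |m - o| = |(x j - o) - (x j - m)| := by ring_nf
        _ ≤ |x j - o| + |x j - m| := abs_sub _ _
        _ = |x j - m| + |x j - o| := by ring
    rw [Finset.sum_add_distrib] at h4
    linarith
  have how : |o - w| ≤ 2 * |m - o| := by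
    calc |o - w| = |(m - w) - (m - o)| := by ring_nf
      _ ≤ |m - w| + |m - o| := abs_sub _ _
      _ ≤ 2 * |m - o| := by linarith
  have hTcard : (T.card : ℝ) ≤ S.card := by exact_mod_cast hcard
  have key : (T.card : ℝ) * |o - w| ≤ 4 * ∑ j ∈ S, |x j - o| := by
    have h5 : (T.card : ℝ) * |o - w| ≤ (S.card : ℝ) * (2 * |m - o|) := by
      have := abs_nonneg (o - w)
      have hT0 : (0:ℝ) ≤ T.card := Nat.cast_nonneg _
      nlinarith [abs_nonneg (m - o)]
    nlinarith
  calc ∑ i ∈ T, |a i - w| ≤ ∑ i ∈ T, (|a i - o| + |o - w|) := by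
        refine Finset.sum_le_sum fun i _ => ?_
        calc |a i - w| = |(a i - o) + (o - w)| := by ring_nf
          _ ≤ |a i - o| + |o - w| := abs_add_le _ _
    _ = (∑ i ∈ T, |a i - o|) + T.card * |o - w| := by
        rw [Finset.sum_add_distrib, Finset.sum_const, nsmul_eq_mul]
    _ ≤ (∑ i ∈ T, |a i - c i|) + 4 * ∑ j ∈ S, |x j - o| := by
        have := Finset.sum_le_sum h1
        linarith
end

section
/- Let S be a finite set, T ⊆ S with |S| ≤ 2|T|, x : S → ℝ, m, o, w ∈ ℝ, and c : S → ℝ. Suppose (i) |m − w| ≤ |m − o|, (ii) |x_i − o| ≤ |x_i − c_i| for every i ∈ T, and (iii) Σ_{i∈S} |x_i − m| ≤ Σ_{i∈S} |x_i − c_i|. Then Σ_{i∈S} |x_i − w| ≤ 4 · Σ_{i∈S} |x_i − c_i| + Σ_{i∈T} |x_i − c_i|. -/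
/-- Equation (4) of the social-cost analysis (Case 1.2.1). -/
theorem routing_case_one_two_one
    {α : Type*} (S T : Finset α) (hTS : T ⊆ S) (hcard : S.card ≤ 2 * T.card)
    (x c : α → ℝ) (m o w : ℝ)
    (h1 : |m - w| ≤ |m - o|)
    (h2 : ∀ i ∈ T, |x i - o| ≤ |x i - c i|)
    (h3 : ∑ i ∈ S, |x i - m| ≤ ∑ i ∈ S, |x i - c i|) :
    ∑ i ∈ S, |x i - w| ≤ 4 * ∑ i ∈ S, |x i - c i| + ∑ i ∈ T, |x i - c i| := by
  set A := ∑ i ∈ S, |x i - m| with hA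
  set B := ∑ i ∈ S, |x i - c i| with hB
  set C := ∑ i ∈ T, |x i - c i| with hC
  have habs : (0:ℝ) ≤ |m - o| := abs_nonneg _
  -- step 1: sum over S of |x i - w| ≤ A + |S| * |m - o|
  have step1 : ∑ i ∈ S, |x i - w| ≤ A + S.card * |m - o| := by
    calc ∑ i ∈ S, |x i - w| ≤ ∑ i ∈ S, (|x i - m| + |m - o|) := by
          refine Finset.sum_le_sum fun i _ => ?_
          calc |x i - w| ≤ |x i - m| + |m - w| := abs_sub_le _ _ _
            _ ≤ |x i - m| + |m - o| := by linarith
      _ = A + S.card * |m - o| := by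
          rw [Finset.sum_add_distrib, Finset.sum_const, nsmul_eq_mul]
  -- step 2: |T| * |m - o| ≤ A + C
  have step2 : (T.card : ℝ) * |m - o| ≤ A + C := by
    have h := Finset.sum_le_sum (s := T)
      (f := fun _ => |m - o|) (g := fun i => |x i - m| + |x i - c i|)
      (fun i hi => by
        have := h2 i hi
        calc |m - o| ≤ |m - x i| + |x i - o| := abs_sub_le _ _ _
          _ ≤ |x i - m| + |x i - c i| := by rw [abs_sub_comm m (x i)]; linarith)
    rw [Finset.sum_const, nsmul_eq_mul, Finset.sum_add_distrib] at h
    have hTm : ∑ i ∈ T, |x i - m| ≤ A :=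
      Finset.sum_le_sum_of_subset_of_nonneg hTS (fun i _ _ => abs_nonneg _)
    linarith
  have hCB : C ≤ B :=
    Finset.sum_le_sum_of_subset_of_nonneg hTS (fun i _ _ => abs_nonneg _)
  have hST : (S.card : ℝ) * |m - o| ≤ 2 * T.card * |m - o| := by
    have : (S.card : ℝ) ≤ 2 * T.card := by exact_mod_cast hcard
    nlinarith
  linarith
end

section
/- Let S be a finite set, x : S → ℝ, m, o₁, o₂ ∈ ℝ, and w : S → ℝ. For i ∈ S set c_i = max(|x_i − o₁|, |x_i − o₂|). Suppose (i) |m − w_i| ≤ max(|m − o₁|, |m − o₂|) for every i ∈ S, and (ii) Σ_{i∈S} |x_i − m| ≤ Σ_{i∈S} |x_i − o₁|. Then Σ_{i∈S} |x_i − w_i| ≤ 3 · Σ_{i∈S} c_i. -/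
/-- Equations (5) and (8) of the Case-2 social-cost analysis combined. -/
theorem routing_case_two
    {α : Type*} (S : Finset α) (x : α → ℝ) (m o1 o2 : ℝ) (w : α → ℝ)
    (h1 : ∀ i ∈ S, |m - w i| ≤ max |m - o1| |m - o2|)
    (h2 : ∑ i ∈ S, |x i - m| ≤ ∑ i ∈ S, |x i - o1|) :
    ∑ i ∈ S, |x i - w i| ≤ 3 * ∑ i ∈ S, max |x i - o1| |x i - o2| := by
  have key : ∀ i ∈ S, |x i - w i| ≤ 2 * |x i - m| + max |x i - o1| |x i - o2| := by
    intro i hi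
    have h3 : max |m - o1| |m - o2| ≤ |x i - m| + max |x i - o1| |x i - o2| := by
      apply max_le
      · calc |m - o1| ≤ |m - x i| + |x i - o1| := by
              simpa using abs_sub_le m (x i) o1
          _ ≤ |x i - m| + max |x i - o1| |x i - o2| := by
              rw [abs_sub_comm]; gcongr; exact le_max_left _ _
      · calc |m - o2| ≤ |m - x i| + |x i - o2| := by
              simpa using abs_sub_le m (x i) o2
          _ ≤ |x i - m| + max |x i - o1| |x i - o2| := by
              rw [abs_sub_comm]; gcongr; exact le_max_right _ _
    calc |x i - w i| ≤ |x i - m| + |m - w i| := abs_sub_le _ _ _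
      _ ≤ |x i - m| + (|x i - m| + max |x i - o1| |x i - o2|) := by
          have := (h1 i hi).trans h3; linarith
      _ = 2 * |x i - m| + max |x i - o1| |x i - o2| := by ring
  calc ∑ i ∈ S, |x i - w i|
      ≤ ∑ i ∈ S, (2 * |x i - m| + max |x i - o1| |x i - o2|) :=
        Finset.sum_le_sum key
    _ = 2 * ∑ i ∈ S, |x i - m| + ∑ i ∈ S, max |x i - o1| |x i - o2| := by
        rw [Finset.sum_add_distrib, Finset.mul_sum]
    _ ≤ 2 * ∑ i ∈ S, |x i - o1| + ∑ i ∈ S, max |x i - o1| |x i - o2| := by linarith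
    _ ≤ 2 * ∑ i ∈ S, max |x i - o1| |x i - o2| + ∑ i ∈ S, max |x i - o1| |x i - o2| := by
        have : ∑ i ∈ S, |x i - o1| ≤ ∑ i ∈ S, max |x i - o1| |x i - o2| :=
          Finset.sum_le_sum fun i _ => le_max_left _ _
        linarith
    _ = 3 * ∑ i ∈ S, max |x i - o1| |x i - o2| := by ring
end

section
/- Let p, m₁, m₂, o₁, o₂, w₂ ∈ ℝ and B ≥ 0. Suppose |p − o₂| ≤ B, |m₂ − o₂| ≤ B, |m₁ − o₂| ≤ B, |m₁ − o₁| ≤ B, and |m₂ − w₂| ≤ |m₂ − o₁|. Then |p − w₂| ≤ 5B. -/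
/-- The chain of triangle inequalities in Case (b) of the max-cost analysis. -/
theorem maxCost_case_b_chain
    (p m1 m2 o1 o2 w2 B : ℝ) (hB : 0 ≤ B)
    (h1 : |p - o2| ≤ B) (h2 : |m2 - o2| ≤ B) (h3 : |m1 - o2| ≤ B)
    (h4 : |m1 - o1| ≤ B) (h5 : |m2 - w2| ≤ |m2 - o1|) :
    |p - w2| ≤ 5 * B := by
  have t1 := abs_sub_le p o2 m2
  have t2 := abs_sub_le (p - o2) 0 (m2 - w2)
  have t3 := abs_sub_le m2 o2 m1
  have t4 := abs_sub_le (m2 - o2) 0 (m1 - o1)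
  have a1 := abs_sub_le p m2 w2
  have a2 := abs_sub_le m2 m1 o1
  have a3 := abs_sub_le p o2 m2
  have e1 : |o2 - m2| = |m2 - o2| := abs_sub_comm _ _
  have e2 : |m1 - o1| = |m1 - o1| := rfl
  have e3 : |o2 - m1| = |m1 - o2| := abs_sub_comm _ _
  have a4 := abs_sub_le m2 o2 o1
  have e4 : |o2 - o1| ≤ |o2 - m1| + |m1 - o1| := abs_sub_le _ _ _
  linarith
end
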